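/- arXiv:2111.06823 — 3 statements merged into one kernel-verified Lean document; each statement's English description precedes it below -/
import Mathlib

section
/- Under the hypotheses of the previous statement (uniform weights, sorted nonflexible loads, t_0 chosen so that L_{t_0} < L ≤ L_{t_0+1}), the water-filling vector (ℓ_t^*) is the unique minimizer of ∑_t (ℓ_t^0 + ℓ_t)^2 over all (ℓ_t) with ℓ_t ≥ 0 and ∑_t ℓ_t = L. -/
/-!
The water-filling vector `x` satisfies the optimality (KKT) conditions of the
problem with water level `c`: every slot is either filled up to `c` or left empty
with a base load already at least `c`. Expanding the square around `x` gives, for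
any competitor `y` with the same total,
`∑ (a + y)² = ∑ (a + x)² + ∑ (y - x)² + 2 ∑ (a + x - c) (y - x)`,
and the last sum is termwise nonnegative, so `x` is optimal and any other optimum
has `∑ (y - x)² = 0`. The ordering of the base loads and `L ≤ L_{t₀+1}` are what
make `c` lie below the base load of every empty slot.
-/

open Finset

def IsWaterLevel {ι : Type*} (s : Finset ι) (a x : ι → ℝ) (c : ℝ) : Prop :=
  ∀ t ∈ s, a t + x t = c ∨ (x t = 0 ∧ c ≤ a t)

namespace IsWaterLevel

variable {ι : Type*} {s : Finset ι} {a x y : ι → ℝ} {c : ℝ}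

theorem sum_sq_add_sum_sq_sub_le (hx : IsWaterLevel s a x c)
    (hy : ∀ t ∈ s, 0 ≤ y t) (hsum : ∑ t ∈ s, x t = ∑ t ∈ s, y t) :
    ∑ t ∈ s, (a t + x t) ^ 2 + ∑ t ∈ s, (y t - x t) ^ 2 ≤ ∑ t ∈ s, (a t + y t) ^ 2 := by
  have hpoint : ∀ t ∈ s,
      (a t + x t) ^ 2 + (y t - x t) ^ 2 + 2 * c * (y t - x t) ≤ (a t + y t) ^ 2 := by
    intro t ht
    rcases hx t ht with hfull | ⟨hempty, hc⟩
    · exact le_of_eq (by linear_combination -2 * (y t - x t) * hfull)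
    · rw [hempty]
      nlinarith [mul_nonneg (sub_nonneg.2 hc) (hy t ht)]
  have hlin : ∑ t ∈ s, 2 * c * (y t - x t) = 0 := by
    rw [← mul_sum, sum_sub_distrib, hsum, sub_self, mul_zero]
  have := sum_le_sum hpoint
  rwa [sum_add_distrib, sum_add_distrib, hlin, add_zero] at this

theorem sum_sq_le (hx : IsWaterLevel s a x c)
    (hy : ∀ t ∈ s, 0 ≤ y t) (hsum : ∑ t ∈ s, x t = ∑ t ∈ s, y t) :
    ∑ t ∈ s, (a t + x t) ^ 2 ≤ ∑ t ∈ s, (a t + y t) ^ 2 := by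
  have := hx.sum_sq_add_sum_sq_sub_le hy hsum
  linarith [sum_nonneg fun t (_ : t ∈ s) => sq_nonneg (y t - x t)]

theorem eq_of_sum_sq_eq (hx : IsWaterLevel s a x c)
    (hy : ∀ t ∈ s, 0 ≤ y t) (hsum : ∑ t ∈ s, x t = ∑ t ∈ s, y t)
    (heq : ∑ t ∈ s, (a t + y t) ^ 2 = ∑ t ∈ s, (a t + x t) ^ 2) :
    ∀ t ∈ s, y t = x t := by
  have hle := hx.sum_sq_add_sum_sq_sub_le hy hsum
  have hzero : ∑ t ∈ s, (y t - x t) ^ 2 = 0 :=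
    le_antisymm (by linarith) (sum_nonneg fun t _ => sq_nonneg _)
  intro t ht
  have := (sum_eq_zero_iff_of_nonneg fun t _ => sq_nonneg (y t - x t)).1 hzero t ht
  exact sub_eq_zero.1 (pow_eq_zero_iff two_ne_zero |>.1 this)

end IsWaterLevel

theorem sum_Icc_ite_le (f : ℕ → ℝ) {t₀ T : ℕ} (h : t₀ ≤ T) :
    ∑ t ∈ Icc 1 T, (if t ≤ t₀ then f t else 0) = ∑ t ∈ Icc 1 t₀, f t := by
  rw [← sum_filter]
  congr 1
  ext t
  simp only [mem_filter, mem_Icc]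
  omega

theorem level_le_of_le_sub_sum {ℓ0 : ℕ → ℝ} {L : ℝ} {t₀ : ℕ} (ht₀ : 0 < t₀)
    (h : L ≤ ((t₀ + 1 : ℕ) : ℝ) * ℓ0 (t₀ + 1) - ∑ s ∈ Icc 1 (t₀ + 1), ℓ0 s) :
    (L + ∑ s ∈ Icc 1 t₀, ℓ0 s) / t₀ ≤ ℓ0 (t₀ + 1) := by
  rw [sum_Icc_succ_top (by omega)] at h
  push_cast at h
  rw [div_le_iff₀ (by exact_mod_cast ht₀)]
  linarith

theorem stmt_2_general (T : ℕ) (ℓ0 : ℕ → ℝ) (L : ℝ)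
    (hsorted : ∀ s t, s ≤ t → ℓ0 s ≤ ℓ0 t)
    (Lt : ℕ → ℝ) (hLt : ∀ t, Lt t = t * ℓ0 t - ∑ s ∈ Icc 1 t, ℓ0 s)
    (t0 : ℕ) (ht0₁ : 1 ≤ t0) (ht0₂ : t0 ≤ T)
    (hhigh : t0 = T ∨ L ≤ Lt (t0 + 1))
    (ℓstar : ℕ → ℝ)
    (hℓstar : ∀ t, ℓstar t =
      if t ≤ t0 then (L + ∑ s ∈ Icc 1 t0, ℓ0 s) / t0 - ℓ0 t else 0) :
    ∀ ℓ : ℕ → ℝ, (∀ t ∈ Icc 1 T, 0 ≤ ℓ t) → (∑ t ∈ Icc 1 T, ℓ t) = L →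
      (∑ t ∈ Icc 1 T, (ℓ0 t + ℓstar t) ^ 2) ≤ ∑ t ∈ Icc 1 T, (ℓ0 t + ℓ t) ^ 2 ∧
      ((∑ t ∈ Icc 1 T, (ℓ0 t + ℓ t) ^ 2) = ∑ t ∈ Icc 1 T, (ℓ0 t + ℓstar t) ^ 2 →
        ∀ t ∈ Icc 1 T, ℓ t = ℓstar t) := by
  intro ℓ hℓ hsum
  set c := (L + ∑ s ∈ Icc 1 t0, ℓ0 s) / t0
  have hc : ∀ t, t0 < t → t ≤ T → c ≤ ℓ0 t := fun t hlt hle =>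
    hhigh.elim (fun h => by omega) fun h =>
      (level_le_of_le_sub_sum ht0₁ (hLt (t0 + 1) ▸ h)).trans (hsorted _ _ hlt)
  have hwater : IsWaterLevel (Icc 1 T) ℓ0 ℓstar c := by
    intro t ht
    rw [hℓstar t]
    split_ifs with h
    · exact Or.inl (by ring)
    · exact Or.inr ⟨rfl, hc t (by omega) (mem_Icc.1 ht).2⟩
  have hstar_sum : ∑ t ∈ Icc 1 T, ℓstar t = ∑ t ∈ Icc 1 T, ℓ t := by
    have ht0 : (t0 : ℝ) ≠ 0 := by positivity
    simp_rw [hℓstar, sum_Icc_ite_le _ ht0₂, sum_sub_distrib, sum_const, Nat.card_Icc,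
      Nat.add_sub_cancel, nsmul_eq_mul, c, mul_div_cancel₀ _ ht0, hsum]
    ring
  exact ⟨hwater.sum_sq_le hℓ hstar_sum, hwater.eq_of_sum_sq_eq hℓ hstar_sum⟩

/-- Optimality of the water-filling schedule (Proposition 1, uniform weights,
sorted loads): the water-filling vector is the unique minimizer of
`∑_t (ℓ0 t + ℓ t)^2` over nonnegative schedules summing to `L`. -/
theorem stmt_2 (T : ℕ) (hT : 1 ≤ T) (ℓ0 : ℕ → ℝ) (L : ℝ)
    (hℓ0 : ∀ t, 0 ≤ ℓ0 t) (hL : 0 < L)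
    (hsorted : ∀ s t, s ≤ t → ℓ0 s ≤ ℓ0 t)
    (Lt : ℕ → ℝ) (hLt : ∀ t, Lt t = t * ℓ0 t - ∑ s ∈ Icc 1 t, ℓ0 s)
    (t0 : ℕ) (ht0₁ : 1 ≤ t0) (ht0₂ : t0 ≤ T)
    (hlow : Lt t0 < L) (hhigh : t0 = T ∨ L ≤ Lt (t0 + 1))
    (ℓstar : ℕ → ℝ)
    (hℓstar : ∀ t, ℓstar t =
      if t ≤ t0 then (L + ∑ s ∈ Icc 1 t0, ℓ0 s) / t0 - ℓ0 t else 0) :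
    ∀ ℓ : ℕ → ℝ, (∀ t ∈ Icc 1 T, 0 ≤ ℓ t) → (∑ t ∈ Icc 1 T, ℓ t) = L →
      (∑ t ∈ Icc 1 T, (ℓ0 t + ℓstar t) ^ 2) ≤ ∑ t ∈ Icc 1 T, (ℓ0 t + ℓ t) ^ 2 ∧
      ((∑ t ∈ Icc 1 T, (ℓ0 t + ℓ t) ^ 2) = ∑ t ∈ Icc 1 T, (ℓ0 t + ℓstar t) ^ 2 →
        ∀ t ∈ Icc 1 T, ℓ t = ℓstar t) :=
  stmt_2_general T ℓ0 L hsorted Lt hLt t0 ht0₁ ht0₂ hhigh ℓstar hℓstar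
end

section
/- Consider the global scheduling problem: minimize ∑_t η_t (∑_i (ℓ_{i,t}^0 + ℓ_{i,t}))^2 over nonnegative ℓ_{i,t} subject to ∑_t ℓ_{i,t} = L_i for each station i. Then its optimal value equals the optimal value of the single-station problem minimize ∑_t η_t (ℓ_t^0 + ℓ_t)^2 with aggregated data ℓ_t^0 := ∑_i ℓ_{i,t}^0 and L := ∑_i L_i, provided L_i ≥ 0 for all i. -/
/-- The optimal value of the global (FO) problem (5) over all stations equals
the optimal value of the single-station problem with aggregated data
`ℓ0 t := ∑_i ℓ0 i t` and `L := ∑_i L i`. -/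
theorem stmt_5 (N T : ℕ) (hN : 0 < N) (hT : 0 < T)
    (η : Fin T → ℝ) (hη : ∀ t, 0 < η t)
    (ℓ0 : Fin N → Fin T → ℝ) (hℓ0 : ∀ i t, 0 ≤ ℓ0 i t)
    (L : Fin N → ℝ) (hL : ∀ i, 0 ≤ L i) :
    sInf {v : ℝ | ∃ ℓ : Fin N → Fin T → ℝ,
        (∀ i t, 0 ≤ ℓ i t) ∧ (∀ i, (∑ t, ℓ i t) = L i) ∧
        v = ∑ t, η t * (∑ i, (ℓ0 i t + ℓ i t)) ^ 2} =
    sInf {v : ℝ | ∃ ℓ : Fin T → ℝ,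
        (∀ t, 0 ≤ ℓ t) ∧ (∑ t, ℓ t) = ∑ i, L i ∧
        v = ∑ t, η t * ((∑ i, ℓ0 i t) + ℓ t) ^ 2} := by
  congr 1
  ext v
  simp only [Set.mem_setOf_eq]
  constructor
  · rintro ⟨ℓ, h1, h2, rfl⟩
    refine ⟨fun t => ∑ i, ℓ i t, fun t => Finset.sum_nonneg fun i _ => h1 i t, ?_, ?_⟩
    · rw [Finset.sum_comm]
      exact Finset.sum_congr rfl fun i _ => h2 i
    · refine Finset.sum_congr rfl fun t _ => ?_
      rw [Finset.sum_add_distrib]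
  · rintro ⟨ℓ, h1, h2, rfl⟩
    by_cases hS : (∑ i, L i) = 0
    · have hLi : ∀ i, L i = 0 := by
        intro i
        have := (Finset.sum_eq_zero_iff_of_nonneg (fun i _ => hL i)).mp hS
        exact this i (Finset.mem_univ i)
      have hlt : ∀ t, ℓ t = 0 := by
        intro t
        have := (Finset.sum_eq_zero_iff_of_nonneg (fun t _ => h1 t)).mp (h2.trans hS)
        exact this t (Finset.mem_univ t)
      refine ⟨fun _ _ => 0, fun _ _ => le_refl 0, fun i => by simp [hLi i], ?_⟩
      refine Finset.sum_congr rfl fun t _ => ?_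
      simp [hlt t]
    · set S := ∑ i, L i with hSdef
      have hSpos : 0 < S := lt_of_le_of_ne (Finset.sum_nonneg fun i _ => hL i) (Ne.symm hS)
      refine ⟨fun i t => L i * ℓ t / S, fun i t => div_nonneg (mul_nonneg (hL i) (h1 t)) hSpos.le, ?_, ?_⟩
      · intro i
        rw [← Finset.sum_div, ← Finset.mul_sum, h2, mul_div_assoc,
          div_self hS, mul_one]
      · refine Finset.sum_congr rfl fun t _ => ?_
        congr 1
        rw [Finset.sum_add_distrib]
        congr 1
        rw [← Finset.sum_div, ← Finset.sum_mul, ← hSdef, mul_comm, mul_div_assoc,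
          div_self hS, mul_one]
end

section
/- For the two-slot scheduling problem (T = 2) with uniform weights, the optimal schedule of charging need L ≥ 0 with sorted nonflexible loads ℓ_1^0 ≤ ℓ_2^0 is: if L ≤ ℓ_2^0 − ℓ_1^0, then ℓ_1^* = L and ℓ_2^* = 0; otherwise ℓ_1^* = (L + ℓ_2^0 − ℓ_1^0)/2 and ℓ_2^* = (L − ℓ_2^0 + ℓ_1^0)/2, and this schedule minimizes (ℓ_1^0 + ℓ_1)^2 + (ℓ_2^0 + ℓ_2)^2 over nonnegative ℓ with ℓ_1 + ℓ_2 = L. -/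
/-- Closed form of the water-filling schedule for `T = 2` slots with uniform
weights and sorted loads `a ≤ b`: if `L ≤ b − a` then `(L, 0)`, otherwise
`((L + b − a)/2, (L − b + a)/2)`; this schedule is feasible and minimizes
`(a + ℓ1)^2 + (b + ℓ2)^2` over nonnegative `(ℓ1, ℓ2)` with `ℓ1 + ℓ2 = L`. -/
theorem stmt_14 (a b L : ℝ) (hab : a ≤ b) (ha : 0 ≤ a) (hL : 0 ≤ L)
    (ℓ1 ℓ2 : ℝ)
    (h1 : ℓ1 = if L ≤ b - a then L else (L + b - a) / 2)
    (h2 : ℓ2 = if L ≤ b - a then 0 else (L - b + a) / 2) :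
    0 ≤ ℓ1 ∧ 0 ≤ ℓ2 ∧ ℓ1 + ℓ2 = L ∧
    ∀ m1 m2 : ℝ, 0 ≤ m1 → 0 ≤ m2 → m1 + m2 = L →
      (a + ℓ1) ^ 2 + (b + ℓ2) ^ 2 ≤ (a + m1) ^ 2 + (b + m2) ^ 2 := by
  by_cases h : L ≤ b - a <;> simp [h] at h1 h2 <;> subst h1 <;> subst h2
  · refine ⟨by linarith, le_refl 0, by ring, ?_⟩
    intro m1 m2 hm1 hm2 hsum
    nlinarith [sq_nonneg m2, sq_nonneg (m2 * (b - a - ℓ1))]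
  · push_neg at h
    refine ⟨by linarith, by linarith, by ring, ?_⟩
    intro m1 m2 hm1 hm2 hsum
    nlinarith [sq_nonneg (m1 - m2 - b + a)]
end
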